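/- Let ω ∈ Ap(S) and let (μ_2, …, μ_ν) be the lexicographically largest tuple among all maximal representations of ω (representations of ω using only g_2, …, g_ν with Σ μ_i = ord(ω)). Then μ_i ≤ γ_i for each i = 2, …, ν. -/

import Mathlib

open Finset

/-- `S` is a numerical semigroup: a submonoid of `(ℕ, +)` with finite complement. -/
def IsNumSgp (S : Set ℕ) : Prop :=
  0 ∈ S ∧ (∀ a ∈ S, ∀ b ∈ S, a + b ∈ S) ∧ (Sᶜ : Set ℕ).Finite

/-- `s` belongs to the Apéry set of `S` with respect to `m`:
`s ∈ S` and `s - m ∉ S` (i.e. no `u ∈ S` with `u + m = s`). -/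
def InApery (S : Set ℕ) (m s : ℕ) : Prop :=
  s ∈ S ∧ ∀ u ∈ S, u + m ≠ s

def AperySet (S : Set ℕ) (m : ℕ) : Set ℕ := {s | InApery S m s}

/-- `ordS S s` is the largest `h` such that `s` is a sum of `h` nonzero elements of `S`. -/
noncomputable def ordS (S : Set ℕ) (s : ℕ) : ℕ :=
  sSup {h : ℕ | ∃ f : Fin h → ℕ, (∀ j, f j ∈ S ∧ f j ≠ 0) ∧ ∑ j, f j = s}

/-- `g` generates `S`. -/
def Generates (S : Set ℕ) {ν : ℕ} (g : Fin ν → ℕ) : Prop :=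
  ∀ s, s ∈ S ↔ ∃ lam : Fin ν → ℕ, ∑ i, lam i * g i = s

/-- `g` is a minimal generating system of `S`: it generates `S`
and no `g i` is generated by the remaining generators. -/
def MinimalGen (S : Set ℕ) {ν : ℕ} (g : Fin ν → ℕ) : Prop :=
  Generates S g ∧ ∀ i, ¬ ∃ lam : Fin ν → ℕ, lam i = 0 ∧ ∑ j, lam j * g j = g i

/-- `lam` is a maximal representation of `s`: the coefficient sum equals `ordS S s`. -/
def IsMaxRep (S : Set ℕ) {ν : ℕ} (g : Fin ν → ℕ) (lam : Fin ν → ℕ) (s : ℕ) : Prop :=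
  ∑ i, lam i * g i = s ∧ ∑ i, lam i = ordS S s

/-- `s` has a unique maximal representation. -/
def UniqueMaxRep (S : Set ℕ) {ν : ℕ} (g : Fin ν → ℕ) (s : ℕ) : Prop :=
  ∃! lam : Fin ν → ℕ, IsMaxRep S g lam s

/-- `β_i = max {h | h g_i ∈ Ap(S) and ord(h g_i) = h}`. -/
noncomputable def betaN (S : Set ℕ) (m : ℕ) {ν : ℕ} (g : Fin ν → ℕ) (i : Fin ν) : ℕ :=
  sSup {h : ℕ | InApery S m (h * g i) ∧ ordS S (h * g i) = h}

/-- `γ_i = max {h | h g_i ∈ Ap(S), ord(h g_i) = h and h g_i has a unique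
maximal representation}`. -/
noncomputable def gammaN (S : Set ℕ) (m : ℕ) {ν : ℕ} (g : Fin ν → ℕ) (i : Fin ν) : ℕ :=
  sSup {h : ℕ | InApery S m (h * g i) ∧ ordS S (h * g i) = h ∧ UniqueMaxRep S g (h * g i)}

/-- `B = {Σ_{i≥2} λ_i g_i : 0 ≤ λ_i ≤ β_i}`. -/
def Bset (S : Set ℕ) (m : ℕ) {ν : ℕ} [NeZero ν] (g : Fin ν → ℕ) : Set ℕ :=
  {s | ∃ lam : Fin ν → ℕ, lam 0 = 0 ∧ (∀ i, lam i ≤ betaN S m g i) ∧ ∑ i, lam i * g i = s}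

/-- `Γ = {Σ_{i≥2} λ_i g_i : 0 ≤ λ_i ≤ γ_i}`. -/
def GammaSet (S : Set ℕ) (m : ℕ) {ν : ℕ} [NeZero ν] (g : Fin ν → ℕ) : Set ℕ :=
  {s | ∃ lam : Fin ν → ℕ, lam 0 = 0 ∧ (∀ i, lam i ≤ gammaN S m g i) ∧ ∑ i, lam i * g i = s}

/-- `s ⪯_M t`. -/
def predM (S : Set ℕ) (s t : ℕ) : Prop :=
  ∃ u ∈ S, s + u = t ∧ ordS S s + ordS S u = ordS S t

/-! Split `ω = mu i * g i + r`, where `r` is represented by the other coefficients of `mu`.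
Superadditivity of `ord` makes both parts of a maximal representation maximal, so `mu i * g i`
has order `mu i`, and it lies in the Apéry set because `ω` does. A second maximal
representation `lam` of `mu i * g i`, completed by the other coefficients of `mu`, is a maximal
representation of `ω`; lexicographic maximality of `mu` forces `lam` to vanish below `i` and
`lam i < mu i`, which is impossible for a strictly increasing `g`. So `mu i` lies in the set
defining `gammaN`, which is bounded because the Apéry set is finite. -/

open Function

section Order

variable {S : Set ℕ}

def ordSet (S : Set ℕ) (s : ℕ) : Set ℕ :=
  {h | ∃ f : Fin h → ℕ, (∀ j, f j ∈ S ∧ f j ≠ 0) ∧ ∑ j, f j = s}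

lemma le_of_mem_ordSet {s h : ℕ} (hh : h ∈ ordSet S s) : h ≤ s := by
  obtain ⟨f, hf, rfl⟩ := hh
  simpa using Finset.card_nsmul_le_sum univ f 1 fun j _ => Nat.one_le_iff_ne_zero.2 (hf j).2

lemma add_mem_ordSet {s t h k : ℕ} (hs : h ∈ ordSet S s) (ht : k ∈ ordSet S t) :
    h + k ∈ ordSet S (s + t) := by
  obtain ⟨f, hf, rfl⟩ := hs
  obtain ⟨f', hf', rfl⟩ := ht
  refine ⟨Fin.append f f', fun j => ?_, by simp [Fin.sum_univ_add]⟩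
  induction j using Fin.addCases <;> simp [hf, hf']

lemma sum_mem_ordSet {ι : Type*} [Fintype ι] {g : ι → ℕ} (hgS : ∀ j, g j ∈ S)
    (hg0 : ∀ j, g j ≠ 0) (lam : ι → ℕ) : ∑ j, lam j ∈ ordSet S (∑ j, lam j * g j) := by
  have hterm (j : ι) : lam j ∈ ordSet S (lam j * g j) :=
    ⟨fun _ => g j, fun _ => ⟨hgS j, hg0 j⟩, by simp⟩
  simpa [Prod.fst_sum, Prod.snd_sum] using
    Finset.sum_induction (fun j => (lam j, lam j * g j)) (fun p => p.1 ∈ ordSet S p.2)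
      (fun _ _ => add_mem_ordSet) ⟨Fin.elim0, fun j => j.elim0, rfl⟩ fun j _ => hterm j

lemma le_ordS {s h : ℕ} (hh : h ∈ ordSet S s) : h ≤ ordS S s :=
  le_csSup ⟨s, fun _ => le_of_mem_ordSet⟩ hh

lemma ordS_mem_ordSet {s : ℕ} (hs : s ∈ S) : ordS S s ∈ ordSet S s := by
  refine Nat.sSup_mem ?_ ⟨s, fun _ => le_of_mem_ordSet⟩
  rcases eq_or_ne s 0 with rfl | h
  · exact ⟨0, Fin.elim0, fun j => j.elim0, rfl⟩
  · exact ⟨1, fun _ => s, fun _ => ⟨hs, h⟩, by simp⟩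

lemma ordS_add_le {s t : ℕ} (hs : s ∈ S) (ht : t ∈ S) :
    ordS S s + ordS S t ≤ ordS S (s + t) :=
  le_ordS (add_mem_ordSet (ordS_mem_ordSet hs) (ordS_mem_ordSet ht))

end Order

section Representations

variable {ι : Type*}

lemma StrictMono.apply_eq_sum_of_sum_mul_le [Fintype ι] [LinearOrder ι] {g : ι → ℕ}
    (hg : StrictMono g) {lam : ι → ℕ} {k : ι} (hlt : ∀ j < k, lam j = 0)
    (h : ∑ j, lam j * g j ≤ (∑ j, lam j) * g k) :
    lam k = ∑ j, lam j := by
  -- each coefficient beyond `k` costs at least one extra unit, since `g k < g j`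
  have hterm (j : ι) : lam j * g k + (if k < j then lam j else 0) ≤ lam j * g j := by
    rcases lt_trichotomy j k with hj | rfl | hj
    · simp [hlt j hj]
    · simp
    · simpa [hj, mul_add] using Nat.mul_le_mul_left (lam j) (hg hj)
  have hsum := Finset.sum_le_sum fun j (_ : j ∈ univ) => hterm j
  rw [sum_add_distrib, ← sum_mul] at hsum
  have hbeyond : ∀ j, k < j → lam j = 0 := fun j hj => by
    simpa [hj] using (sum_eq_zero_iff.1 (by omega : ∑ j, (if k < j then lam j else 0) = 0)) j
      (mem_univ j)
  refine (sum_eq_single k (fun j _ hjk => ?_) (by simp)).symm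
  exact hjk.lt_or_gt.elim (hlt j) (hbeyond j)

variable [DecidableEq ι]

lemma single_add_update_zero (lam : ι → ℕ) (i : ι) :
    Pi.single i (lam i) + update lam i 0 = lam := by
  funext j
  by_cases h : j = i <;> simp [h]

lemma sum_single_mul [Fintype ι] (g : ι → ℕ) (i : ι) (c : ℕ) :
    ∑ j, (Pi.single i c : ι → ℕ) j * g j = c * g i := by
  simp [Pi.single_apply, ite_mul]

lemma sum_mul_eq_add_sum_update_zero [Fintype ι] (lam g : ι → ℕ) (i : ι) :
    ∑ j, lam j * g j = lam i * g i + ∑ j, update lam i 0 j * g j := by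
  conv_lhs => rw [← single_add_update_zero lam i]
  simp only [Pi.add_apply, add_mul, sum_add_distrib, sum_single_mul]

lemma sum_eq_add_sum_update_zero [Fintype ι] (lam : ι → ℕ) (i : ι) :
    ∑ j, lam j = lam i + ∑ j, update lam i 0 j := by
  simpa using sum_mul_eq_add_sum_update_zero lam 1 i

end Representations

section NumericalSemigroup

variable {S : Set ℕ} {ν : ℕ} {g : Fin ν → ℕ} {m : ℕ}

lemma Generates.sum_mul_mem (hgen : Generates S g) (lam : Fin ν → ℕ) : ∑ j, lam j * g j ∈ S :=
  (hgen _).2 ⟨lam, rfl⟩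

lemma Generates.mem (hgen : Generates S g) (i : Fin ν) : g i ∈ S := by
  simpa [sum_single_mul] using hgen.sum_mul_mem (Pi.single i 1)

lemma IsMaxRep.of_add_left (hgen : Generates S g) (hg0 : ∀ j, g j ≠ 0) {lam lam' : Fin ν → ℕ}
    {s : ℕ} (h : IsMaxRep S g (lam + lam') s) :
    IsMaxRep S g lam (∑ j, lam j * g j) := by
  refine ⟨rfl, le_antisymm (le_ordS (sum_mem_ordSet hgen.mem hg0 lam)) ?_⟩
  have hadd := ordS_add_le (hgen.sum_mul_mem lam) (hgen.sum_mul_mem lam')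
  have hs : ∑ j, lam j * g j + ∑ j, lam' j * g j = s := by
    rw [← h.1]
    simp [add_mul, sum_add_distrib]
  have hsum : ∑ j, lam j + ∑ j, lam' j = ordS S s := by
    rw [← h.2]
    simp [sum_add_distrib]
  have hle := le_ordS (S := S) (sum_mem_ordSet hgen.mem hg0 lam')
  rw [hs] at hadd
  omega

lemma InApery.ne_zero {s : ℕ} (h : InApery S m s) : m ≠ 0 := by
  rintro rfl
  exact h.2 s h.1 rfl

lemma InApery.of_add (hadd : ∀ a ∈ S, ∀ b ∈ S, a + b ∈ S) {s t : ℕ} (h : InApery S m (s + t))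
    (hs : s ∈ S) (ht : t ∈ S) : InApery S m s :=
  ⟨hs, fun u hu hum => h.2 (u + t) (hadd u hu t ht) (by omega)⟩

lemma InApery.coeff_eq_zero (hgen : Generates S g) {lam : Fin ν → ℕ} {i : Fin ν}
    (h : InApery S (g i) (∑ j, lam j * g j)) : lam i = 0 := by
  by_contra hi
  obtain ⟨c, hc⟩ := Nat.exists_eq_add_one.2 (Nat.pos_of_ne_zero hi)
  have hlower := sum_mul_eq_add_sum_update_zero (update lam i c) g i
  rw [update_self, update_idem] at hlower
  refine h.2 _ (hgen.sum_mul_mem (update lam i c)) ?_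
  rw [hlower, sum_mul_eq_add_sum_update_zero lam g i, hc]
  ring

lemma bddAbove_inApery_mul (hfin : (Sᶜ : Set ℕ).Finite) {c : ℕ} (hc : c ≠ 0) :
    BddAbove {h | InApery S m (h * c)} := by
  obtain ⟨N, hN⟩ := hfin.bddAbove
  refine ⟨N + m, fun h hh => ?_⟩
  have hlt : h * c ≤ N + m := by
    by_contra hgt
    refine hh.2 (h * c - m) (not_not.1 fun hn => ?_) (by omega)
    have := hN hn
    omega
  nlinarith [Nat.le_mul_of_pos_right h (Nat.pos_of_ne_zero hc)]

lemma eq_single_of_isMaxRep_of_lexMax [NeZero ν] (hgen : Generates S g) (hmono : StrictMono g)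
    {ω : ℕ} {mu : Fin ν → ℕ} (hmu0 : mu 0 = 0) (hmu : IsMaxRep S g mu ω)
    (hlex : ∀ lam : Fin ν → ℕ, lam 0 = 0 → IsMaxRep S g lam ω → lam ≠ mu →
      ∃ k : Fin ν, lam k < mu k ∧ ∀ j : Fin ν, j < k → lam j = mu j)
    {i : Fin ν} (hAp : InApery S (g 0) (mu i * g i)) (hord : ordS S (mu i * g i) = mu i)
    {lam : Fin ν → ℕ} (hlam : IsMaxRep S g lam (mu i * g i)) : lam = Pi.single i (mu i) := by
  set rest := update mu i 0
  have hmu_eq : Pi.single i (mu i) + rest = mu := single_add_update_zero mu i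
  have hlam0 : lam 0 = 0 := InApery.coeff_eq_zero hgen (hlam.1 ▸ hAp)
  have hsum : ∑ j, lam j = mu i := hlam.2.trans hord
  have hmax : IsMaxRep S g (lam + rest) ω := by
    constructor
    · simp only [Pi.add_apply, add_mul, sum_add_distrib, hlam.1, ← hmu.1,
        sum_mul_eq_add_sum_update_zero mu g i, rest]
    · simp only [Pi.add_apply, sum_add_distrib, hsum, ← hmu.2, sum_eq_add_sum_update_zero mu i,
        rest]
  by_contra hne
  obtain ⟨k, hk, hbefore⟩ := hlex (lam + rest) (by simp [rest, update_apply, hlam0, hmu0]) hmax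
    fun h => hne (add_right_cancel (h.trans hmu_eq.symm))
  obtain rfl : k = i := by
    by_contra hki
    simp [rest, hki] at hk
  have hlt : ∀ j < k, lam j = 0 := fun j hj => by simpa [rest, hj.ne] using hbefore j hj
  have hconc := hmono.apply_eq_sum_of_sum_mul_le hlt (by rw [hlam.1, hsum])
  simp [rest] at hk
  omega

end NumericalSemigroup

theorem lexmax_maxrep_coeff_le_gamma_general (S : Set ℕ) {ν : ℕ} [NeZero ν] (g : Fin ν → ℕ)
    (hS : IsNumSgp S) (hgen : MinimalGen S g) (hmono : StrictMono g)
    (ω : ℕ) (hω : InApery S (g 0) ω) (mu : Fin ν → ℕ) (hmu0 : mu 0 = 0)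
    (hmu : IsMaxRep S g mu ω)
    (hlex : ∀ lam : Fin ν → ℕ, lam 0 = 0 → IsMaxRep S g lam ω → lam ≠ mu →
      ∃ k : Fin ν, lam k < mu k ∧ ∀ j : Fin ν, j < k → lam j = mu j) :
    ∀ i : Fin ν, mu i ≤ gammaN S (g 0) g i := by
  intro i
  obtain ⟨hgen, -⟩ := hgen
  have hg0 (j : Fin ν) : g j ≠ 0 :=
    (Nat.pos_of_ne_zero hω.ne_zero |>.trans_le (hmono.monotone (Fin.zero_le j))).ne'
  set rest := update mu i 0
  have hmu_eq : Pi.single i (mu i) + rest = mu := single_add_update_zero mu i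
  have hsingle : IsMaxRep S g (Pi.single i (mu i)) (mu i * g i) := by
    have h := (hmu_eq ▸ hmu).of_add_left hgen hg0
    rwa [sum_single_mul] at h
  have hAp : InApery S (g 0) (mu i * g i) := by
    refine InApery.of_add hS.2.1 ?_ (hsingle.1 ▸ hgen.sum_mul_mem _) (hgen.sum_mul_mem rest)
    rwa [← sum_mul_eq_add_sum_update_zero, hmu.1]
  have hord : ordS S (mu i * g i) = mu i := by simpa using hsingle.2.symm
  have huniq : UniqueMaxRep S g (mu i * g i) :=
    ⟨_, hsingle, fun _ => eq_single_of_isMaxRep_of_lexMax hgen hmono hmu0 hmu hlex hAp hord⟩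
  exact le_csSup ((bddAbove_inApery_mul hS.2.2 (hg0 i)).mono fun _ hh => hh.1)
    ⟨hAp, hord, huniq⟩

theorem lexmax_maxrep_coeff_le_gamma (S : Set ℕ) {ν : ℕ} [NeZero ν] (g : Fin ν → ℕ) (hν : 2 ≤ ν)
    (hS : IsNumSgp S) (hgen : MinimalGen S g) (hmono : StrictMono g)
    (hmpos : 0 < g 0) (hmul : ∀ s ∈ S, s ≠ 0 → g 0 ≤ s)
    (ω : ℕ) (hω : InApery S (g 0) ω) (mu : Fin ν → ℕ) (hmu0 : mu 0 = 0)
    (hmu : IsMaxRep S g mu ω)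
    (hlex : ∀ lam : Fin ν → ℕ, lam 0 = 0 → IsMaxRep S g lam ω → lam ≠ mu →
      ∃ k : Fin ν, lam k < mu k ∧ ∀ j : Fin ν, j < k → lam j = mu j) :
    ∀ i : Fin ν, mu i ≤ gammaN S (g 0) g i :=
  lexmax_maxrep_coeff_le_gamma_general S g hS hgen hmono ω hω mu hmu0 hmu hlex
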